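/- For every real number c > 0, the series ∑_{n=1}^∞ n!/((c)ₙ·n²) converges and equals ∑_{k=0}^∞ 1/(c+k)², the value of the trigamma function ψ⁽¹⁾(c). In particular, for an integer m ≥ 1, ∑_{n=1}^∞ n!/((m/2)ₙ·n²) = ψ⁽¹⁾(m/2). -/

import Mathlib

/-!
Both sides are the two iterated sums of the nonnegative double series
`∑_{k,n ≥ 0} n! / (c+k)_{n+2}`. Summing over `k` telescopes, because
`1/(a)_{n+1} - 1/(a+1)_{n+1} = (n+1)/(a)_{n+2}`, and leaves `n!/((n+1)(c)_{n+1})`, the `n`-th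
term of the series. Summing over `n` telescopes too: `∑_n n!/(e)_{n+1} = 1/(e-1)` for `e > 1`,
where the tail `n!/(e)_n` tends to `0` by Euler's limit formula for `Γ`; with `e = c+k+1` and
`(c+k)_{n+2} = (c+k)(c+k+1)_{n+1}` this gives `1/(c+k)^2`.
-/

open Filter Topology

/-- Pochhammer symbol `(a)ₙ = ∏_{i=1}^n (a+i-1)`. -/
noncomputable def poch (a : ℝ) (n : ℕ) : ℝ := ∏ i ∈ Finset.range n, (a + i)

lemma poch_pos {a : ℝ} (ha : 0 < a) (n : ℕ) : 0 < poch a n :=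
  Finset.prod_pos fun i _ => by positivity

lemma poch_succ (a : ℝ) (n : ℕ) : poch a (n + 1) = poch a n * (a + n) :=
  Finset.prod_range_succ _ _

lemma poch_succ_eq_mul_poch_add_one (a : ℝ) (n : ℕ) : poch a (n + 1) = a * poch (a + 1) n := by
  rw [poch, Finset.prod_range_succ', mul_comm, Nat.cast_zero, add_zero, poch]
  congr 1
  refine Finset.prod_congr rfl fun i _ => ?_
  push_cast
  ring

lemma one_le_poch {a : ℝ} (ha : 1 ≤ a) (n : ℕ) : 1 ≤ poch a n := by
  induction n with
  | zero => simp [poch]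
  | succ n ih =>
    rw [poch_succ]
    exact one_le_mul_of_one_le_of_one_le ih (by linarith [n.cast_nonneg (α := ℝ)])

lemma le_poch_succ {a : ℝ} (ha : 0 ≤ a) (n : ℕ) : a ≤ poch a (n + 1) := by
  rw [poch_succ_eq_mul_poch_add_one]
  exact le_mul_of_one_le_right ha (one_le_poch (by linarith) n)

/-- `n! / (s)ₙ ~ Γ(s) n^{1-s}`, by Euler's limit formula. -/
lemma tendsto_factorial_div_poch {s : ℝ} (hs : 1 < s) :
    Tendsto (fun n : ℕ => (n.factorial : ℝ) / poch s n) atTop (𝓝 0) := by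
  have hpow : ∀ {t : ℝ}, 0 < t → Tendsto (fun n : ℕ => (n : ℝ) ^ (-t)) atTop (𝓝 0) :=
    fun ht => (tendsto_rpow_neg_atTop ht).comp tendsto_natCast_atTop_atTop
  have hdecay : Tendsto (fun n : ℕ => (n : ℝ) ^ (-(s - 1)) + s * (n : ℝ) ^ (-s)) atTop (𝓝 0) := by
    simpa using (hpow (sub_pos.2 hs)).add ((hpow (by linarith)).const_mul s)
  have hlim := (Real.GammaSeq_tendsto_Gamma s).mul hdecay
  rw [mul_zero] at hlim
  refine hlim.congr' ?_
  filter_upwards [eventually_gt_atTop 0] with n hn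
  have hn : (0 : ℝ) < n := Nat.cast_pos.2 hn
  have hp := (poch_pos (by linarith) n).ne'
  rw [Real.GammaSeq, ← poch, poch_succ, Real.rpow_neg hn.le, Real.rpow_neg hn.le,
    Real.rpow_sub hn, Real.rpow_one]
  field_simp
  ring

lemma hasSum_of_eq_sub_succ {f g : ℕ → ℝ} {l : ℝ} (hfg : ∀ n, f n = g n - g (n + 1))
    (hf : ∀ n, 0 ≤ f n) (hg : Tendsto g atTop (𝓝 l)) : HasSum f (g 0 - l) := by
  rw [hasSum_iff_tendsto_nat_of_nonneg hf]
  simp only [hfg, Finset.sum_range_sub']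
  exact tendsto_const_nhds.sub hg

lemma hasSum_factorial_div_poch_succ {s : ℝ} (hs : 1 < s) :
    HasSum (fun n : ℕ => (n.factorial : ℝ) / poch s (n + 1)) (1 / (s - 1)) := by
  have hs0 : 0 < s := by linarith
  have hs1 : s - 1 ≠ 0 := by linarith
  have h := hasSum_of_eq_sub_succ (f := fun n : ℕ => (n.factorial : ℝ) / poch s (n + 1))
    (g := fun n : ℕ => (n.factorial : ℝ) / poch s n / (s - 1))
    (fun n => ?_) (fun n => div_nonneg (Nat.cast_nonneg _) (poch_pos hs0 _).le)
    ((tendsto_factorial_div_poch hs).div_const _)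
  · simpa [poch] using h
  · have hp := (poch_pos hs0 n).ne'
    rw [poch_succ, Nat.factorial_succ]
    push_cast
    field_simp
    ring

lemma inv_poch_sub_inv_poch_add_one {a : ℝ} (ha : 0 < a) (n : ℕ) :
    (poch a n)⁻¹ - (poch (a + 1) n)⁻¹ = n / poch a (n + 1) := by
  have hp := (poch_pos ha n).ne'
  have hp' := (poch_pos (by linarith : 0 < a + 1) n).ne'
  have hrec : poch a n * (a + n) = a * poch (a + 1) n := by
    rw [← poch_succ, poch_succ_eq_mul_poch_add_one]
  rw [poch_succ]
  field_simp
  linear_combination -hrec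

lemma hasSum_inv_poch_add_nat {a : ℝ} (ha : 0 < a) (n : ℕ) :
    HasSum (fun k : ℕ => 1 / poch (a + k) (n + 2)) (1 / ((n + 1) * poch a (n + 1))) := by
  have hak : ∀ k : ℕ, 0 < a + k := fun k => by positivity
  have hn : (0 : ℝ) < n + 1 := by positivity
  have hg : Tendsto (fun k : ℕ => ((n + 1) * poch (a + k) (n + 1))⁻¹) atTop (𝓝 0) := by
    refine tendsto_inv_atTop_zero.comp (Tendsto.const_mul_atTop hn ?_)
    refine tendsto_atTop_mono (fun k => le_poch_succ (hak k).le n) ?_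
    exact tendsto_atTop_add_const_left _ a tendsto_natCast_atTop_atTop
  have h := hasSum_of_eq_sub_succ (f := fun k : ℕ => 1 / poch (a + k) (n + 2)) (fun k => ?_)
    (fun k => (one_div_pos.2 (poch_pos (hak k) _)).le) hg
  · simpa using h
  · have h := inv_poch_sub_inv_poch_add_one (hak k) (n + 1)
    push_cast at h ⊢
    rw [← add_assoc, mul_inv, mul_inv, ← mul_sub, h]
    field_simp

lemma HasSum.prod_fiberwise_swap_of_nonneg {α β : Type*} {f : α × β → ℝ} {u : α → ℝ}
    {v : β → ℝ} {s : ℝ} (hf : 0 ≤ f) (hu : ∀ a, HasSum (fun b => f (a, b)) (u a))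
    (hv : ∀ b, HasSum (fun a => f (a, b)) (v b)) (hs : HasSum u s) : HasSum v s := by
  have hsummable : Summable f := (summable_prod_of_nonneg hf).2
    ⟨fun a => (hu a).summable, hs.summable.congr fun a => (hu a).tsum_eq.symm⟩
  have hfs : HasSum f s := hs.unique (hsummable.hasSum.prod_fiberwise hu) ▸ hsummable.hasSum
  exact ((Equiv.prodComm β α).hasSum_iff.2 hfs).prod_fiberwise hv

lemma summable_one_div_add_nat_sq {c : ℝ} (hc : 0 < c) :
    Summable fun k : ℕ => 1 / (c + k) ^ 2 := by
  refine ((Real.summable_one_div_nat_add_rpow c 2).2 one_lt_two).congr fun k => ?_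
  rw [abs_of_pos (by positivity), Real.rpow_two, add_comm]

lemma hasSum_factorial_div_poch_mul_sq {c : ℝ} (hc : 0 < c) :
    HasSum (fun n : ℕ => ((n + 1).factorial : ℝ) / (poch c (n + 1) * ((n : ℝ) + 1) ^ 2))
      (∑' k : ℕ, 1 / (c + (k : ℝ)) ^ 2) := by
  have hck : ∀ k : ℕ, 0 < c + k := fun k => by positivity
  set f : ℕ × ℕ → ℝ := fun p => (p.2.factorial : ℝ) / poch (c + p.1) (p.2 + 2)
  have hcol : ∀ k : ℕ, HasSum (fun n => f (k, n)) (1 / (c + k) ^ 2) := by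
    intro k
    have h := (hasSum_factorial_div_poch_succ (s := c + k + 1) (by linarith [hck k])).div_const
      (c + k)
    simp only [add_sub_cancel_right, div_div, ← sq] at h
    have hterm : (fun n => f (k, n)) =
        fun n : ℕ => (n.factorial : ℝ) / (poch (c + k + 1) (n + 1) * (c + k)) := by
      ext n
      rw [mul_comm, ← poch_succ_eq_mul_poch_add_one]
    exact hterm ▸ h
  have hrow : ∀ n : ℕ, HasSum (fun k => f (k, n))
      ((n.factorial : ℝ) / ((n + 1) * poch c (n + 1))) := by
    intro n
    simpa only [mul_one_div] using (hasSum_inv_poch_add_nat hc n).mul_left (n.factorial : ℝ)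
  have hf : 0 ≤ f := fun p => div_nonneg (Nat.cast_nonneg _) (poch_pos (hck p.1) _).le
  convert HasSum.prod_fiberwise_swap_of_nonneg hf hcol hrow
    (summable_one_div_add_nat_sq hc).hasSum using 2 with n
  rw [Nat.factorial_succ]
  push_cast
  field_simp

/-- for every real `c > 0`, the series `∑_{n=1}^∞ n!/((c)ₙ·n²)` converges
and equals the trigamma value `ψ⁽¹⁾(c) = ∑_{k=0}^∞ 1/(c+k)²`; in particular, for an
integer `m ≥ 1`, `∑_{n=1}^∞ n!/((m/2)ₙ·n²) = ψ⁽¹⁾(m/2)`. -/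
theorem stmt8 :
    (∀ c : ℝ, 0 < c →
      HasSum (fun n : ℕ => ((n + 1).factorial : ℝ) / (poch c (n + 1) * ((n : ℝ) + 1) ^ 2))
        (∑' k : ℕ, 1 / (c + (k : ℝ)) ^ 2)) ∧
    (∀ m : ℕ, 1 ≤ m →
      HasSum (fun n : ℕ =>
          ((n + 1).factorial : ℝ) / (poch ((m : ℝ) / 2) (n + 1) * ((n : ℝ) + 1) ^ 2))
        (∑' k : ℕ, 1 / ((m : ℝ) / 2 + (k : ℝ)) ^ 2)) :=
  ⟨fun _ hc => hasSum_factorial_div_poch_mul_sq hc,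
    fun _ hm => hasSum_factorial_div_poch_mul_sq (div_pos (Nat.cast_pos.2 hm) two_pos)⟩
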